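/- Let d : ℝ → ℝ satisfy the Leibniz rule d(xy) = x·d(y) + y·d(x) for all x, y ∈ ℝ, let 0 ≤ q < p be constants, and let f : ℝ \ (pℤ + q) → ℝ be a differentiable function which is p-periodic, i.e., f(x + p) = f(x) for all x ∈ ℝ \ (pℤ + q), and such that f'(x) ≠ 0 for all x ∈ ℝ \ (pℤ + q). If d(f(x)) = f'(x)·d(x) holds for all x ∈ ℝ \ (pℤ + q), then d is additive, and hence d is a standard derivation. -/

import Mathlib

/-!
Off the lattice coset `pℤ + q` the derivative of `f` is `p`-periodic together with `f`, so
`f'(x) d(x + p) = d(f(x + p)) = d(f(x)) = f'(x) d(x)` and `d` is `p`-periodic there. Using the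
Leibniz rule with suitable points outside `pℤ + q`, this local periodicity is transported to the
integers, to `p`, and finally to the statement that `d` is `1`-periodic everywhere. A function
with the Leibniz rule and period `1` is additive: `(x + 1)² = (x² + 2x) + 1` gives
`d(x² + 2x) = d(x²) + d(2x)`, and every pair `a, b` of nonzero numbers is `c x², c (2x)` for
suitable `c, x`.
-/

open Filter

def IsLeibniz {K : Type*} [Mul K] [Add K] (d : K → K) : Prop :=
  ∀ x y : K, d (x * y) = x * d y + y * d x

namespace IsLeibniz

variable {K : Type*} [Field K] {d : K → K}

theorem map_zero (hd : IsLeibniz d) : d 0 = 0 := by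
  simpa using hd 0 0

theorem map_one_eq_zero (hd : IsLeibniz d) : d 1 = 0 := by
  have h := hd 1 1
  simp only [mul_one, one_mul] at h
  linear_combination -h

theorem map_neg [NeZero (2 : K)] (hd : IsLeibniz d) (u : K) : d (-u) = -d u := by
  have h := hd (-1) (-1)
  rw [neg_mul_neg, mul_one, hd.map_one_eq_zero] at h
  have hneg_one : d (-1) = 0 :=
    (mul_eq_zero.mp (by linear_combination h : (2 : K) * d (-1) = 0)).resolve_left two_ne_zero
  rw [neg_eq_neg_one_mul, hd, hneg_one]
  ring

theorem map_inv (hd : IsLeibniz d) (u : K) : d u⁻¹ = -d u / u ^ 2 := by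
  rcases eq_or_ne u 0 with rfl | hu
  · simp [hd.map_zero]
  have h := hd u u⁻¹
  rw [mul_inv_cancel₀ hu, hd.map_one_eq_zero] at h
  rw [eq_div_iff (pow_ne_zero 2 hu)]
  linear_combination -u * h - d u * mul_inv_cancel₀ hu

theorem map_ratCast_eq_zero [CharZero K] (hd : IsLeibniz d) (hnat : ∀ n : ℕ, d n = 0) (r : ℚ) :
    d r = 0 := by
  have hint : ∀ m : ℤ, d m = 0 := by
    intro m
    obtain ⟨n, rfl | rfl⟩ := Int.eq_nat_or_neg m
    · exact_mod_cast hnat n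
    · rw [Int.cast_neg, Int.cast_natCast, hd.map_neg, hnat, neg_zero]
  rw [Rat.cast_def, div_eq_mul_inv, hd, hd.map_inv, hint, hnat]
  ring

theorem map_add_of_map_add_one [NeZero (2 : K)] (hd : IsLeibniz d)
    (hd1 : ∀ t, d (t + 1) = d t) (a b : K) : d (a + b) = d a + d b := by
  have hd2 : d 2 = 0 := by rw [← one_add_one_eq_two, hd1, hd.map_one_eq_zero]
  have key : ∀ x : K, d (x * x + 2 * x) = d (x * x) + d (2 * x) := fun x => by
    rw [← hd1, show x * x + 2 * x + 1 = (x + 1) * (x + 1) by ring, hd, hd1, hd, hd, hd2]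
    ring
  rcases eq_or_ne a 0 with rfl | ha
  · rw [zero_add, hd.map_zero, zero_add]
  rcases eq_or_ne b 0 with rfl | hb
  · rw [add_zero, hd.map_zero, add_zero]
  have h4 : (4 : K) ≠ 0 := by
    rw [show (4 : K) = 2 * 2 by norm_num]
    exact mul_ne_zero two_ne_zero two_ne_zero
  -- `a = c x²` and `b = c (2x)` for `c = b² / 4a` and `x = 2a / b`
  obtain ⟨c, x, rfl, rfl⟩ : ∃ c x : K, c * (x * x) = a ∧ c * (2 * x) = b :=
    ⟨b ^ 2 / (4 * a), 2 * a / b, by field_simp; ring, by field_simp; ring⟩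
  rw [← mul_add, hd, key, hd c (x * x), hd c (2 * x)]
  ring

end IsLeibniz

def latticeCoset (p q : ℝ) : Set ℝ := {x | ∃ k : ℤ, x = p * k + q}

theorem latticeCoset_countable (p q : ℝ) : (latticeCoset p q).Countable :=
  (Set.countable_range fun k : ℤ => p * k + q).mono <| by rintro x ⟨k, rfl⟩; exact ⟨k, rfl⟩

theorem isClosed_latticeCoset {p : ℝ} (hp : p ≠ 0) (q : ℝ) : IsClosed (latticeCoset p q) := by
  have h : latticeCoset p q = (fun x => (x - q) / p) ⁻¹' Set.range ((↑) : ℤ → ℝ) := by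
    ext x
    simp only [latticeCoset, Set.mem_preimage, Set.mem_range]
    refine exists_congr fun k => ?_
    constructor <;> intro h <;> field_simp at h ⊢ <;> linarith
  rw [h]
  exact Real.isClosed_range_intCast.preimage (by fun_prop)

theorem add_mem_latticeCoset_iff {p q x : ℝ} :
    x + p ∈ latticeCoset p q ↔ x ∈ latticeCoset p q := by
  constructor
  · rintro ⟨k, hk⟩
    exact ⟨k - 1, by push_cast; linarith⟩
  · rintro ⟨k, hk⟩
    exact ⟨k + 1, by push_cast; linarith⟩

theorem exists_eq_mul_of_mem_latticeCoset_of_two_mul_mem {p q x : ℝ}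
    (hx : x ∈ latticeCoset p q) (h2x : 2 * x ∈ latticeCoset p q) : ∃ k : ℤ, x = p * k := by
  obtain ⟨k, hk⟩ := hx
  obtain ⟨l, hl⟩ := h2x
  exact ⟨l - k, by push_cast; linarith⟩

theorem exists_notMem_and_mul_notMem {S : Set ℝ} (hS : S.Countable) {c : ℝ} (hc : c ≠ 0) :
    ∃ x, x ∉ S ∧ c * x ∉ S := by
  obtain ⟨x, hx⟩ := ((hS.union (hS.preimage (mul_right_injective₀ hc))).dense_compl ℝ).nonempty
  exact ⟨x, fun h => hx (Or.inl h), fun h => hx (Or.inr h)⟩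

theorem deriv_add_eq_of_eqOn {𝕜 F : Type*} [NontriviallyNormedField 𝕜] [NormedAddCommGroup F]
    [NormedSpace 𝕜 F] {f : 𝕜 → F} {s : Set 𝕜} {p x : 𝕜} (hs : IsOpen s)
    (hper : ∀ y ∈ s, f (y + p) = f y) (hx : x ∈ s) : deriv f (x + p) = deriv f x := by
  rw [← deriv_comp_add_const]
  exact EventuallyEq.deriv_eq (eventually_of_mem (hs.mem_nhds hx) hper)

theorem apply_add_eq_of_apply_comp_eq_deriv_mul {d f : ℝ → ℝ} {s : Set ℝ} {p : ℝ} (hs : IsOpen s)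
    (hsp : ∀ x ∈ s, x + p ∈ s) (hper : ∀ x ∈ s, f (x + p) = f x)
    (hf' : ∀ x ∈ s, deriv f x ≠ 0) (hdf : ∀ x ∈ s, d (f x) = deriv f x * d x)
    {x : ℝ} (hx : x ∈ s) : d (x + p) = d x := by
  have h := hdf (x + p) (hsp x hx)
  rw [hper x hx, deriv_add_eq_of_eqOn hs hper hx, hdf x hx] at h
  exact (mul_left_cancel₀ (hf' x hx) h).symm

theorem apply_add_nsmul_eq {α β : Type*} [AddMonoid α] {d : α → β} {s : Set α} {p : α}
    (hsp : ∀ x ∈ s, x + p ∈ s) (hper : ∀ x ∈ s, d (x + p) = d x) (n : ℕ) {x : α} (hx : x ∈ s) :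
    d (x + n • p) = d x := by
  induction n generalizing x with
  | zero => rw [zero_nsmul, add_zero]
  | succ n ih => rw [succ_nsmul', ← add_assoc, ih (hsp x hx), hper x hx]

namespace IsLeibniz

variable {d : ℝ → ℝ} {p : ℝ}

theorem map_natCast_eq_zero_of_periodicOn (hd : IsLeibniz d) (hp : p ≠ 0) {s : Set ℝ}
    (hs : sᶜ.Countable) (hsp : ∀ x ∈ s, x + p ∈ s) (hper : ∀ x ∈ s, d (x + p) = d x) (n : ℕ) :
    d n = 0 := by
  rcases eq_or_ne n 0 with rfl | hn
  · exact_mod_cast hd.map_zero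
  obtain ⟨x, hx, hnx⟩ := exists_notMem_and_mul_notMem hs (Nat.cast_ne_zero.mpr hn)
  rw [Set.notMem_compl_iff] at hx hnx
  -- compare `d (n (x + p))` computed by the Leibniz rule and by periodicity at `n x`
  have h := apply_add_nsmul_eq hsp hper n hnx
  rw [nsmul_eq_mul, ← mul_add, hd, hd, hper x hx] at h
  exact (mul_eq_zero.mp (by linear_combination h : p * d n = 0)).resolve_left hp

variable {q : ℝ}

theorem map_natCast_eq_zero (hd : IsLeibniz d) (hp : p ≠ 0)
    (hper : ∀ x ∉ latticeCoset p q, d (x + p) = d x) (n : ℕ) : d n = 0 :=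
  hd.map_natCast_eq_zero_of_periodicOn hp (s := (latticeCoset p q)ᶜ)
    (by simpa using latticeCoset_countable p q) (fun _ hx => mt add_mem_latticeCoset_iff.1 hx)
    hper n

theorem map_period_eq_zero (hd : IsLeibniz d) (hp : p ≠ 0)
    (hper : ∀ x ∉ latticeCoset p q, d (x + p) = d x) : d p = 0 := by
  have hnat := hd.map_natCast_eq_zero hp hper
  have of_eq_nat_mul : ∀ (x : ℝ) (m : ℕ), x ∉ latticeCoset p q → p = m * x → d p = 0 := by
    intro x m hx hpx
    have hm : (m : ℝ) ≠ 0 := by rintro hm; exact hp (by rw [hpx, hm, zero_mul])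
    have h := hper x hx
    rw [hpx, show x + m * x = ((m + 1 : ℕ) : ℝ) * x by push_cast; ring, hd, hnat] at h
    push_cast at h
    have hdx : d x = 0 :=
      (mul_eq_zero.mp (by linear_combination h : (m : ℝ) * d x = 0)).resolve_left hm
    rw [hpx, hd, hdx, hnat]
    ring
  -- `p / 2` and `p` cannot both lie in `pℤ + q`, since `p / 2 ∉ pℤ`
  by_cases hhalf : p / 2 ∈ latticeCoset p q
  · refine of_eq_nat_mul p 1 (fun hpL => ?_) (by simp)
    obtain ⟨k, hk⟩ := exists_eq_mul_of_mem_latticeCoset_of_two_mul_mem hhalf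
      (by rwa [mul_div_cancel₀ p two_ne_zero])
    have : (2 : ℝ) * k = 1 := by field_simp at hk; linarith
    have : (2 : ℤ) * k = 1 := by exact_mod_cast this
    omega
  · exact of_eq_nat_mul (p / 2) 2 hhalf (by push_cast; ring)

theorem map_add_one_of_mul_eq (hd : IsLeibniz d) (hp : p ≠ 0)
    (hper : ∀ x ∉ latticeCoset p q, d (x + p) = d x) {x t : ℝ} (n : ℕ) (hn : n ≠ 0)
    (hx : x ∉ latticeCoset p q) (hxt : x * t = n * p) : d (t + 1) = d t := by
  have hx0 : x ≠ 0 := by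
    rintro rfl
    exact mul_ne_zero (Nat.cast_ne_zero.mpr hn) hp (by rw [← hxt, zero_mul])
  -- `x (t + 1) = x + n p`, where `d` is invariant, while `d (x t) = d (n p) = 0`
  have hnat := hd.map_natCast_eq_zero hp hper
  have hxt' := congrArg d hxt
  rw [hd, hd, hd.map_period_eq_zero hp hper, hnat] at hxt'
  have h := apply_add_nsmul_eq (fun _ hy => mt add_mem_latticeCoset_iff.1 hy) hper n hx
  rw [nsmul_eq_mul, ← hxt, show x + x * t = x * (t + 1) by ring, hd] at h
  refine mul_left_cancel₀ hx0 ?_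
  linear_combination h - hxt'

theorem map_add_one (hd : IsLeibniz d) (hp : p ≠ 0)
    (hper : ∀ x ∉ latticeCoset p q, d (x + p) = d x) (t : ℝ) : d (t + 1) = d t := by
  have hrat := hd.map_ratCast_eq_zero (hd.map_natCast_eq_zero hp hper)
  by_cases ht : ∃ r : ℚ, t = r
  · obtain ⟨r, rfl⟩ := ht
    rw [← Rat.cast_one, ← Rat.cast_add, hrat, hrat]
  have ht0 : t ≠ 0 := fun h => ht ⟨0, by simp [h]⟩
  -- `p / t` and `2 p / t` cannot both lie in `pℤ + q`, since `t⁻¹ ∉ ℤ`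
  by_cases h1 : p / t ∈ latticeCoset p q
  · refine hd.map_add_one_of_mul_eq hp hper 2 two_ne_zero (x := 2 * (p / t)) (fun h2 => ht ?_)
      (by field_simp; norm_num)
    obtain ⟨k, hk⟩ := exists_eq_mul_of_mem_latticeCoset_of_two_mul_mem h1 h2
    have hk' : t⁻¹ = k := mul_left_cancel₀ hp (by rw [← div_eq_mul_inv, hk])
    exact ⟨(k : ℚ)⁻¹, by rw [Rat.cast_inv, Rat.cast_intCast, ← hk', inv_inv]⟩
  · exact hd.map_add_one_of_mul_eq hp hper 1 one_ne_zero h1 (by field_simp; simp)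

end IsLeibniz

theorem additive_of_leibniz_of_periodic_general
    (d : ℝ → ℝ) (hleib : ∀ x y : ℝ, d (x * y) = x * d y + y * d x)
    (p q : ℝ) (hq : 0 ≤ q) (hqp : q < p)
    (f : ℝ → ℝ)
    (hper : ∀ x : ℝ, (¬ ∃ k : ℤ, x = p * k + q) → f (x + p) = f x)
    (hf' : ∀ x : ℝ, (¬ ∃ k : ℤ, x = p * k + q) → deriv f x ≠ 0)
    (hdf : ∀ x : ℝ, (¬ ∃ k : ℤ, x = p * k + q) → d (f x) = deriv f x * d x) :
    ∀ x y : ℝ, d (x + y) = d x + d y := by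
  have hp : p ≠ 0 := (hq.trans_lt hqp).ne'
  have hdper : ∀ x ∉ latticeCoset p q, d (x + p) = d x := fun _ hx =>
    apply_add_eq_of_apply_comp_eq_deriv_mul (isClosed_latticeCoset hp q).isOpen_compl
      (fun _ hy => mt add_mem_latticeCoset_iff.1 hy) hper hf' hdf hx
  exact IsLeibniz.map_add_of_map_add_one hleib (IsLeibniz.map_add_one hleib hp hdper)

/-- If `d : ℝ → ℝ` satisfies the Leibniz rule, `0 ≤ q < p`, `f` is a differentiable
`p`-periodic function on `ℝ \ (pℤ + q)` with nonvanishing derivative, and `d` is a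
derivation with respect to `f`, then `d` is additive, hence a standard derivation. -/
theorem additive_of_leibniz_of_periodic
    (d : ℝ → ℝ) (hleib : ∀ x y : ℝ, d (x * y) = x * d y + y * d x)
    (p q : ℝ) (hq : 0 ≤ q) (hqp : q < p)
    (f : ℝ → ℝ)
    (hf : ∀ x : ℝ, (¬ ∃ k : ℤ, x = p * k + q) → DifferentiableAt ℝ f x)
    (hper : ∀ x : ℝ, (¬ ∃ k : ℤ, x = p * k + q) → f (x + p) = f x)
    (hf' : ∀ x : ℝ, (¬ ∃ k : ℤ, x = p * k + q) → deriv f x ≠ 0)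
    (hdf : ∀ x : ℝ, (¬ ∃ k : ℤ, x = p * k + q) → d (f x) = deriv f x * d x) :
    ∀ x y : ℝ, d (x + y) = d x + d y :=
  additive_of_leibniz_of_periodic_general d hleib p q hq hqp f hper hf' hdf
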